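/- Let w₀ → ⋯ → w_t be a semi-computation with reduced history H, where w₀ = x₁^{δ₁} x₂^{δ₂} x₃^{δ₃} is a reduced word with x_i ∈ 𝒜₁ and δ_i ∈ {±1}. Then there exist u₀, u₁, u₂, u₃ ∈ F(ℬ) such that: (1) w_t = u₀ x₁^{δ₁} u₁ x₂^{δ₂} u₂ x₃^{δ₃} u₃; (2) ‖u₀‖, ‖u₃‖ ≤ D·t; (3) (1/2)·D·t ≤ ‖u₁‖ + ‖u₂‖ ≤ 3·D·t; (4) the pair (u₁, u₂) uniquely determines H: if w₀ → ⋯ → w'_{t'} is any semi-computation with reduced history H' starting from the same w₀ and w'_{t'} = u₀'' x₁^{δ₁} u₁ x₂^{δ₂} u₂ x₃^{δ₃} u₃'' for some u₀'', u₃'' ∈ F(ℬ), then H' = H. -/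

import Mathlib

/-- The alphabet `𝒜₁ ⊔ ℬ` (also used as the index set `𝒜 ⊔ ℬ`): `Sum.inl a` is the
letter `a₁ ∈ 𝒜₁` (resp. the index `a ∈ 𝒜`), and `Sum.inr i` encodes `b₁, b₂ ∈ ℬ`. -/
abbrev MLetter (n : ℕ) := Sum (Fin n) (Fin 2)

/-- `D = 4n(n+2)`. -/
def Dconst (n : ℕ) : ℕ := 4 * n * (n + 2)

/-- `b₁`. -/
def bb1 (n : ℕ) : FreeGroup (MLetter n) := FreeGroup.of (Sum.inr 0)

/-- `b₂`. -/
def bb2 (n : ℕ) : FreeGroup (MLetter n) := FreeGroup.of (Sum.inr 1)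

/-- `k = η(y,a)`, normalized to lie in `{1, …, n(n+2) = D/4}`. -/
def kVal (n : ℕ) (η : MLetter n × Fin n ≃ Fin (n * (n + 2))) (y : MLetter n) (a : Fin n) :
    ℕ :=
  (η (y, a)).val + 1

/-- `v(y,a) = b₁^k (b₂b₁)^{(D-2k)/2} b₂^k`, a reduced word of length `D` in `F(ℬ)`. -/
def vWord (n : ℕ) (η : MLetter n × Fin n ≃ Fin (n * (n + 2))) (y : MLetter n) (a : Fin n) :
    FreeGroup (MLetter n) :=
  bb1 n ^ kVal n η y a * (bb2 n * bb1 n) ^ (2 * n * (n + 2) - kVal n η y a) *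
    bb2 n ^ kVal n η y a

/-- `w^ε` for a sign `ε : Bool` (`true ↦ w`, `false ↦ w⁻¹`). -/
def bpow {α : Type*} (w : FreeGroup α) (ε : Bool) : FreeGroup α := if ε then w else w⁻¹

/-- The letter map of the automorphism `φ_y^{ε}`. -/
def phiAux (n : ℕ) (η : MLetter n × Fin n ≃ Fin (n * (n + 2))) (y : MLetter n) (ε : Bool) :
    MLetter n → FreeGroup (MLetter n)
  | Sum.inl a => bpow (vWord n η y a) ε * FreeGroup.of (Sum.inl a)
  | Sum.inr i => FreeGroup.of (Sum.inr i)

/-- The automorphism `φ_y^{ε}` of `F(𝒜₁ ⊔ ℬ)`: it fixes `ℬ` pointwise and sends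
`a₁ ↦ v(y,a) a₁` (for `ε = +1`), resp. `a₁ ↦ v(y,a)⁻¹ a₁` (for `ε = -1`). -/
def phiM (n : ℕ) (η : MLetter n × Fin n ≃ Fin (n * (n + 2))) (y : MLetter n) (ε : Bool) :
    FreeGroup (MLetter n) →* FreeGroup (MLetter n) :=
  FreeGroup.lift (phiAux n η y ε)

/-- The map `ρ_y^{ε}`: `ρ_y^{+1}(w) = φ_y(w)·y⁻¹` (with `y` read as the letter `a₁`
when `y = a ∈ 𝒜`), `ρ_{b_i}^{-1}(w) = φ_{b_i}^{-1}(w)·b_i`, and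
`ρ_a^{-1}(w) = φ_a^{-1}(w)·v(a,a)⁻¹a₁`. -/
def rhoM (n : ℕ) (η : MLetter n × Fin n ≃ Fin (n * (n + 2))) (y : MLetter n) (ε : Bool)
    (w : FreeGroup (MLetter n)) : FreeGroup (MLetter n) :=
  if ε then phiM n η y true w * (FreeGroup.of y)⁻¹
  else
    match y with
    | Sum.inl a =>
        phiM n η (Sum.inl a) false w * (vWord n η (Sum.inl a) a)⁻¹ *
          FreeGroup.of (Sum.inl a)
    | Sum.inr i => phiM n η (Sum.inr i) false w * FreeGroup.of (Sum.inr i)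

/-- `‖w‖`: the length of the reduced word of `w`. -/
def rlen (n : ℕ) (w : FreeGroup (MLetter n)) : ℕ := (FreeGroup.toWord w).length

/-- `|w|_𝒜`: the number of `𝒜₁^{±1}`-letters in the reduced word of `w`. -/
def aCount (n : ℕ) (w : FreeGroup (MLetter n)) : ℕ :=
  ((FreeGroup.toWord w).filter fun p => p.1.isLeft).length

/-- The `𝒜`-projection `δ(w)`: delete the `ℬ^{±1}`-letters of the reduced word of `w`
and replace each `a₁^{±1}` by `a^{±1}`. -/
def aProj (n : ℕ) (w : FreeGroup (MLetter n)) : List (Fin n × Bool) :=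
  (FreeGroup.toWord w).filterMap fun p =>
    Sum.elim (fun a => some (a, p.2)) (fun _ => none) p.1

/-- `w ∈ F(ℬ)`. -/
def IsBWord (n : ℕ) (w : FreeGroup (MLetter n)) : Prop :=
  ∀ p ∈ FreeGroup.toWord w, (p.1).isRight = true

/-- The product `u₀ x₁^{δ₁} u₁ x₂^{δ₂} ⋯ u_{k-1} x_k^{δ_k} u_k`
(with `0`-based indexing of `u`, `x`, `d`). -/
def wordProd (n : ℕ) (k : ℕ) (u : ℕ → FreeGroup (MLetter n)) (x : ℕ → Fin n)
    (d : ℕ → Bool) : FreeGroup (MLetter n) :=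
  ((List.range k).map fun i => u i * bpow (FreeGroup.of (Sum.inl (x i))) (d i)).prod * u k

/-- A computation: `w_{i+1} = ρ_{y_i}^{ε_i}(w_i)` for all `i < t`. -/
def IsComputation (n : ℕ) (η : MLetter n × Fin n ≃ Fin (n * (n + 2))) (t : ℕ)
    (y : ℕ → MLetter n) (e : ℕ → Bool) (w : ℕ → FreeGroup (MLetter n)) : Prop :=
  ∀ i < t, w (i + 1) = rhoM n η (y i) (e i) (w i)

/-- A semi-computation: `w_{i+1} = φ_{y_i}^{ε_i}(w_i)` for all `i < t`. -/
def IsSemiComputation (n : ℕ) (η : MLetter n × Fin n ≃ Fin (n * (n + 2))) (t : ℕ)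
    (y : ℕ → MLetter n) (e : ℕ → Bool) (w : ℕ → FreeGroup (MLetter n)) : Prop :=
  ∀ i < t, w (i + 1) = phiM n η (y i) (e i) (w i)

/-- The history `y₁^{ε₁} ⋯ y_t^{ε_t}` is a reduced word: there is no `i` with
`y_{i+1} = y_i` and `ε_{i+1} = -ε_i`. -/
def ReducedHistory (n : ℕ) (t : ℕ) (y : ℕ → MLetter n) (e : ℕ → Bool) : Prop :=
  ∀ i, i + 1 < t → ¬(y (i + 1) = y i ∧ e (i + 1) = !e i)

/-- A rear shift of `w 0`: a computation with reduced history such that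
`|w₀|_𝒜 = ⋯ = |w_{t-1}|_𝒜 = |w_t|_𝒜 + 1`. -/
def IsRearShift (n : ℕ) (η : MLetter n × Fin n ≃ Fin (n * (n + 2))) (t : ℕ)
    (y : ℕ → MLetter n) (e : ℕ → Bool) (w : ℕ → FreeGroup (MLetter n)) : Prop :=
  1 ≤ t ∧ IsComputation n η t y e w ∧ ReducedHistory n t y e ∧
    ∀ i < t, aCount n (w i) = aCount n (w t) + 1

/-- A shift of `w 0`: a computation with reduced history ending at the empty word. -/
def IsShift (n : ℕ) (η : MLetter n × Fin n ≃ Fin (n * (n + 2))) (t : ℕ)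
    (y : ℕ → MLetter n) (e : ℕ → Bool) (w : ℕ → FreeGroup (MLetter n)) : Prop :=
  IsComputation n η t y e w ∧ ReducedHistory n t y e ∧ w t = 1

/-- A reduced word is cyclically reduced if its first letter is not the inverse
of its last letter. -/
def CyclicallyReducedWord {α : Type*} (l : List (α × Bool)) : Prop :=
  ∀ a ∈ l.head?, ∀ b ∈ l.getLast?, a ≠ (b.1, !b.2)


/-!
Every `φ_y^{±1}` fixes `F(ℬ)` pointwise, so a semi-computation with history `H` sends each
letter `a₁` to `v_H(a) a₁`, where `v_H(a)` is the image of `H` under `y ↦ v(y, a)`. Hence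
`w_t = u₀ x₁^{δ₁} u₁ x₂^{δ₂} u₂ x₃^{δ₃} u₃` with every `uᵢ` the image, under the homomorphism
`ψ : (y, a) ↦ v(y, a)`, of one or two copies of `H^{±1}` tagged by the `xᵢ`.

The words `v(y, a)` have length `D`, and since their exponents `k = η(y, a) ≤ D/4` are pairwise
distinct, two consecutive factors of a reduced product cancel in at most `D/4` letters. So `ψ`
stretches lengths by a factor between `D/2` and `D`; this gives the bounds and makes `ψ`
injective. Since `x₁^{δ₁} x₂^{δ₂} x₃^{δ₃}` is reduced, the copy of `H^{±1}` tagged by `x₂` in `u₁`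
or in `u₂` does not interact with the other one, so `(u₁, u₂)` determines `H`.
-/

namespace FreeGroup

variable {α β γ ι : Type*}

theorem isReduced_of_forall_snd_eq {L : List (α × Bool)} {s : Bool} (h : ∀ p ∈ L, p.2 = s) :
    IsReduced L :=
  List.Pairwise.isChain <|
    List.pairwise_of_forall_mem_list fun a ha b hb _ => (h a ha).trans (h b hb).symm

theorem mk_append_mul_mk_invRev_append (A B C : List (α × Bool)) :
    mk (A ++ C) * mk (invRev C ++ B) = mk (A ++ B) := by
  rw [← mul_mk, ← mul_mk, ← mul_mk, ← inv_mk]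
  group

theorem invRev_replicate (a : α) (s : Bool) (j : ℕ) :
    invRev (List.replicate j (a, s)) = List.replicate j (a, !s) := by
  simp [invRev]

theorem lift_mk_singleton [Group γ] (f : α → γ) (p : α × Bool) :
    lift f (mk [p]) = cond p.2 (f p.1) (f p.1)⁻¹ := by
  simp [lift_mk]

theorem lift_mk_cons [Group γ] (f : β → γ) (p : β × Bool) (l : List (β × Bool)) :
    lift f (mk (p :: l)) = lift f (mk [p]) * lift f (mk l) := by
  rw [← (lift f).map_mul, mul_mk, List.singleton_append]

section SmallCancellation

variable [DecidableEq α] {f : β → FreeGroup α} {L c : ℕ}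

theorem IsReduced.toWord_mk {L : List (α × Bool)} (h : IsReduced L) : (mk L).toWord = L :=
  FreeGroup.toWord_mk.trans h.reduce_eq

theorem isReduced_of_norm_mk_eq_length {L : List (α × Bool)} (h : norm (mk L) = L.length) :
    IsReduced L := by
  rw [norm, toWord_mk] at h
  exact IsReduced.of_reduce_eq (reduce.red.sublist.eq_of_length h)

theorem toWord_mul_of_overlap {x y : FreeGroup α} {A B C R : List (α × Bool)}
    (hx : x.toWord = A ++ C) (hy : y.toWord = invRev C ++ (B ++ R)) (hAB : IsReduced (A ++ B))
    (hB : B ≠ []) : (x * y).toWord = A ++ B ++ R := by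
  have hBR : IsReduced (B ++ R) :=
    (hy ▸ isReduced_toWord (x := y)).infix (List.suffix_append _ _).isInfix
  rw [← mk_toWord (x := x), ← mk_toWord (x := y), hx, hy, mk_append_mul_mk_invRev_append,
    ← List.append_assoc, (hAB.append_overlap hBR hB).toWord_mk]

theorem norm_lift_mk_singleton (hf : ∀ b, norm (f b) = L) (p : β × Bool) :
    norm (lift f (mk [p])) = L := by
  rw [lift_mk_singleton]
  cases p.2 <;> simp [hf]

variable (f c) in
/-- Whenever two letters `p`, `q` do not cancel, the reduced words of their images overlap in a
piece `C` of length at most `c`, and what remains of them does not cancel any further. -/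
def CancelsAtMost : Prop :=
  ∀ p q : β × Bool, IsReduced [p, q] → ∃ A B C : List (α × Bool), C.length ≤ c ∧
    (lift f (mk [p])).toWord = A ++ C ∧ (lift f (mk [q])).toWord = invRev C ++ B ∧
    IsReduced (A ++ B)

/-- Since `2c < L`, the overlaps on the two sides of a letter never meet. -/
theorem CancelsAtMost.exists_toWord_lift_mk_cons (hcan : CancelsAtMost f c)
    (hf : ∀ b, norm (f b) = L) (hc : 2 * c < L) :
    ∀ (l : List (β × Bool)) (p : β × Bool), IsReduced (p :: l) →
      ∃ R, (lift f (mk (p :: l))).toWord = (lift f (mk [p])).toWord.take (L - c) ++ R ∧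
        (L - 2 * c) * (l.length + 1) ≤ norm (lift f (mk (p :: l)))
  | [], p, _ => ⟨_, (List.take_append_drop _ _).symm, by
      rw [norm_lift_mk_singleton hf, List.length_nil, zero_add, mul_one]; omega⟩
  | q :: l, p, hred => by
    obtain ⟨hpq, hql⟩ := isReduced_cons_cons.1 hred
    obtain ⟨R, hR, hlen⟩ := hcan.exists_toWord_lift_mk_cons hf hc l q hql
    obtain ⟨A, B, C, hC, hp, hq, hAB⟩ :=
      hcan p q (isReduced_cons_cons.2 ⟨hpq, IsReduced.singleton⟩)
    have hLp : A.length + C.length = L := by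
      rw [← List.length_append, ← hp, ← norm, norm_lift_mk_singleton hf]
    have hLq : C.length + B.length = L := by
      rw [← invRev_length, ← List.length_append, ← hq, ← norm, norm_lift_mk_singleton hf]
    set B' := B.take (L - c - C.length) with hB'
    have hq' : (lift f (mk (q :: l))).toWord = invRev C ++ (B' ++ R) := by
      rw [hR, hq, List.take_append,
        List.take_of_length_le (by rw [invRev_length]; omega), invRev_length, List.append_assoc]
    have hB'ne : B' ≠ [] := by
      rw [hB', ← List.length_pos_iff, List.length_take]
      omega
    have hAB' : IsReduced (A ++ B') :=
      hAB.infix ((List.prefix_append_right_inj A).2 (List.take_prefix _ _)).isInfix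
    have hpql := toWord_mul_of_overlap hp hq' hAB' hB'ne
    rw [← lift_mk_cons] at hpql
    refine ⟨A.drop (L - c) ++ B' ++ R, ?_, ?_⟩
    · rw [hpql, hp, List.take_append_of_le_length (by omega), ← List.append_assoc,
        ← List.append_assoc, List.take_append_drop]
    · have hN : norm (lift f (mk (q :: l))) = C.length + B'.length + R.length := by
        rw [norm, hq', List.length_append, List.length_append, invRev_length, Nat.add_assoc]
      have hX : (L - 2 * c) * ((q :: l).length + 1) =
          (L - 2 * c) * (l.length + 1) + (L - 2 * c) := by
        rw [List.length_cons]; ring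
      rw [norm, hpql, List.length_append, List.length_append, hX]
      omega

variable [DecidableEq β]

theorem norm_lift_le (hf : ∀ b, norm (f b) ≤ L) (x : FreeGroup β) :
    norm (lift f x) ≤ L * norm x := by
  suffices h : ∀ l : List (β × Bool), norm (lift f (mk l)) ≤ L * l.length by
    simpa only [mk_toWord, norm] using h x.toWord
  intro l
  induction l with
  | nil => simp
  | cons p l ih =>
    have hp : norm (lift f (mk [p])) ≤ L := by
      rw [lift_mk_singleton]
      cases p.2 <;> simp [hf]
    calc norm (lift f (mk (p :: l))) ≤ L + L * l.length :=
          (lift_mk_cons f p l ▸ norm_mul_le _ _).trans (add_le_add hp ih)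
      _ = L * (p :: l).length := by rw [List.length_cons]; ring

theorem CancelsAtMost.mul_norm_le_norm_lift (hcan : CancelsAtMost f c)
    (hf : ∀ b, norm (f b) = L) (hc : 2 * c < L) (x : FreeGroup β) :
    (L - 2 * c) * norm x ≤ norm (lift f x) := by
  conv_rhs => rw [← mk_toWord (x := x)]
  show (L - 2 * c) * x.toWord.length ≤ _
  cases h : x.toWord with
  | nil => simp
  | cons p l =>
    obtain ⟨-, -, hlen⟩ := hcan.exists_toWord_lift_mk_cons hf hc l p (h ▸ isReduced_toWord)
    exact hlen

theorem CancelsAtMost.lift_injective (hcan : CancelsAtMost f c)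
    (hf : ∀ b, norm (f b) = L) (hc : 2 * c < L) : Function.Injective (lift f) :=
  (injective_iff_map_eq_one _).2 fun x hx => by
    have h := hcan.mul_norm_le_norm_lift hf hc x
    rw [hx, norm_one, Nat.le_zero, Nat.mul_eq_zero] at h
    exact norm_eq_zero.1 (h.resolve_left (by omega))

end SmallCancellation

section VWords

variable {x z : α} {s : Bool} {k l m m' : ℕ}

variable (x z s k m) in
def vList : List (α × Bool) :=
  List.replicate k (x, s) ++ (List.replicate m [(z, s), (x, s)]).flatten ++
    List.replicate k (z, s)

variable (x z k m) in
def vElem : FreeGroup α := of x ^ k * (of z * of x) ^ m * of z ^ k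

theorem vList_length : (vList x z s k m).length = 2 * k + 2 * m := by
  simp only [vList, List.length_append, List.length_replicate, List.length_flatten,
    List.map_replicate, List.length_cons, List.length_nil, List.sum_replicate, smul_eq_mul]
  ring

theorem snd_of_mem_vList {p : α × Bool} (hp : p ∈ vList x z s k m) : p.2 = s := by
  simp only [vList, List.mem_append, List.mem_replicate, List.mem_flatten] at hp
  aesop

theorem invRev_vList : invRev (vList x z s k m) = vList z x (!s) k m := by
  simp [vList, invRev, List.map_flatten, List.reverse_flatten, List.map_replicate]

theorem mk_vList : mk (vList x z true k m) = vElem x z k m := by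
  have hrep : ∀ (a : α) (j : ℕ), mk (List.replicate j (a, true)) = of a ^ j := fun a j => by
    classical
    rw [← toWord_of_pow, mk_toWord]
  have halt : ∀ j, mk (List.replicate j [(z, true), (x, true)]).flatten = (of z * of x) ^ j := by
    intro j
    induction j with
    | zero => rfl
    | succ j ih => rw [List.replicate_succ, List.flatten_cons, ← mul_mk, ih, pow_succ']; rfl
  rw [vList, ← mul_mk, ← mul_mk, hrep, hrep, halt, vElem]

theorem isReduced_vList_append_vList : IsReduced (vList x z s k m ++ vList x z s l m') :=
  isReduced_of_forall_snd_eq fun _ hp =>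
    (List.mem_append.1 hp).elim snd_of_mem_vList snd_of_mem_vList

theorem isReduced_append_of_vList {A B C : List (α × Bool)} {a b : α × Bool}
    (hA : vList x z s k m = A ++ [a] ++ C) (hB : vList z x (!s) l m' = invRev C ++ b :: B)
    (hab : a.1 ≠ b.1) : IsReduced (A ++ [a] ++ b :: B) :=
  List.isChain_append.2
    ⟨isReduced_of_forall_snd_eq fun _ hp => snd_of_mem_vList (hA ▸ List.mem_append_left _ hp),
      isReduced_of_forall_snd_eq fun _ hp => snd_of_mem_vList (hB ▸ List.mem_append_right _ hp),
      fun a' ha' b' hb' h => (hab (by simp_all)).elim⟩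

theorem exists_vList_overlap (hxz : x ≠ z) (hkl : k ≠ l) (hm : m ≠ 0) (hm' : m' ≠ 0) :
    ∃ A B C : List (α × Bool), C.length ≤ min k l ∧ vList x z s k m = A ++ C ∧
      vList z x (!s) l m' = invRev C ++ B ∧ IsReduced (A ++ B) := by
  obtain ⟨m, rfl⟩ := Nat.exists_eq_succ_of_ne_zero hm
  obtain ⟨m', rfl⟩ := Nat.exists_eq_succ_of_ne_zero hm'
  rcases Nat.lt_or_gt_of_ne hkl with hlt | hgt
  · obtain ⟨d, rfl⟩ := Nat.exists_eq_add_of_lt hlt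
    have hA : vList x z s k (m + 1) = List.replicate k (x, s) ++
        (List.replicate m [(z, s), (x, s)]).flatten ++ [(z, s)] ++ [(x, s)] ++
          List.replicate k (z, s) := by
      simp [vList, List.replicate_succ']
    have hB : vList z x (!s) (k + d + 1) (m' + 1) = invRev (List.replicate k (z, s)) ++
        (z, !s) :: (List.replicate d (z, !s) ++
          (List.replicate (m' + 1) [(x, !s), (z, !s)]).flatten ++
            List.replicate (k + d + 1) (x, !s)) := by
      rw [invRev_replicate, vList, Nat.add_assoc, List.replicate_add k (d + 1) (z, !s)]
      simp [List.replicate_succ]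
    exact ⟨_, _, _, by rw [List.length_replicate]; omega, hA, hB,
      isReduced_append_of_vList hA hB hxz⟩
  · obtain ⟨d, rfl⟩ := Nat.exists_eq_add_of_lt hgt
    have hA : vList x z s (l + d + 1) (m + 1) = List.replicate (l + d + 1) (x, s) ++
        (List.replicate (m + 1) [(z, s), (x, s)]).flatten ++ List.replicate d (z, s) ++
          [(z, s)] ++ List.replicate l (z, s) := by
      rw [vList, show l + d + 1 = d + 1 + l by omega, List.replicate_add (d + 1) l (z, s),
        List.replicate_succ' (n := d) (a := (z, s))]
      simp only [List.append_assoc]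
    have hB : vList z x (!s) l (m' + 1) = invRev (List.replicate l (z, s)) ++
        (x, !s) :: ((z, !s) :: (List.replicate m' [(x, !s), (z, !s)]).flatten ++
          List.replicate l (x, !s)) := by
      simp [vList, invRev_replicate, List.replicate_succ]
    exact ⟨_, _, _, by rw [List.length_replicate]; omega, hA, hB,
      isReduced_append_of_vList hA hB hxz.symm⟩

variable [DecidableEq α]

theorem toWord_vElem : (vElem x z k m).toWord = vList x z true k m := by
  rw [← mk_vList]
  exact (isReduced_of_forall_snd_eq fun _ => snd_of_mem_vList).toWord_mk

theorem norm_vElem : norm (vElem x z k m) = 2 * k + 2 * m := by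
  rw [norm, toWord_vElem, vList_length]

theorem cancelsAtMost_vElem {κ : β → ℕ} (hκ : Function.Injective κ) {Q : ℕ} (hQ : 0 < Q)
    (hκQ : ∀ b, κ b ≤ Q) (hxz : x ≠ z) :
    CancelsAtMost (fun b => vElem x z (κ b) (2 * Q - κ b)) Q := by
  have hword : ∀ p : β × Bool,
      (lift (fun b => vElem x z (κ b) (2 * Q - κ b)) (mk [p])).toWord =
        cond p.2 (vList x z true (κ p.1) (2 * Q - κ p.1))
          (vList z x false (κ p.1) (2 * Q - κ p.1)) := by
    rintro ⟨b, _ | _⟩ <;> simp [toWord_vElem, toWord_inv, invRev_vList]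
  have hm : ∀ b, 2 * Q - κ b ≠ 0 := fun b => by have := hκQ b; omega
  rintro ⟨b, _ | _⟩ ⟨b', _ | _⟩ hbb' <;> simp only [hword, cond_true, cond_false]
  · exact ⟨_, _, [], by simp, (List.append_nil _).symm, rfl, isReduced_vList_append_vList⟩
  · obtain ⟨A, B, C, hC, hA, hB, hAB⟩ := exists_vList_overlap (s := false) hxz.symm
      (hκ.ne (by simpa using hbb')) (hm b) (hm b')
    exact ⟨A, B, C, hC.trans ((min_le_left _ _).trans (hκQ b)), hA, hB, hAB⟩
  · obtain ⟨A, B, C, hC, hA, hB, hAB⟩ := exists_vList_overlap (s := true) hxz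
      (hκ.ne (by simpa using hbb')) (hm b) (hm b')
    exact ⟨A, B, C, hC.trans ((min_le_left _ _).trans (hκQ b)), hA, hB, hAB⟩
  · exact ⟨_, _, [], by simp, (List.append_nil _).symm, rfl, isReduced_vList_append_vList⟩

end VWords

section Gaps

theorem norm_map_le [DecidableEq α] [DecidableEq ι] (f : α → ι) (g : FreeGroup α) :
    norm (map f g) ≤ norm g := by
  have h := norm_lift_le (L := 1) (f := of ∘ f) (fun a => (norm_of (f a)).le) g
  rwa [one_mul, ← map_eq_lift] at h

variable [DecidableEq ι]

variable (i : ι) in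
def slice : FreeGroup (α × ι) →* FreeGroup α := lift fun q => if q.2 = i then of q.1 else 1

theorem slice_map_prodMk (i j : ι) (g : FreeGroup α) :
    slice i (map (·, j) g) = if j = i then g else 1 := by
  split_ifs with hji
  · subst hji
    exact DFunLike.congr_fun
      (ext_hom ((slice j).comp (map (·, j))) (MonoidHom.id _) fun a => by simp [slice]) g
  · exact DFunLike.congr_fun
      (ext_hom ((slice i).comp (map (·, j))) 1 fun a => by simp [slice, hji]) g

theorem norm_slice_le [DecidableEq α] (i : ι) (g : FreeGroup (α × ι)) :
    norm (slice i g) ≤ norm g := by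
  have h := norm_lift_le (L := 1) (f := fun q : α × ι => if q.2 = i then of q.1 else 1)
    (fun q => by split_ifs <;> simp) g
  rwa [one_mul] at h

def bpowLeft (g : FreeGroup α) (d : Bool) : FreeGroup α := if d then g else 1

def bpowRight (g : FreeGroup α) (d : Bool) : FreeGroup α := if d then 1 else g⁻¹

variable (H : FreeGroup α) (x : ι) (d : Bool) (x' : ι) (d' : Bool) in
/-- The part of `φ_H(x^d x'^{d'})` between `x^d` and `x'^{d'}`, written in the letters
`(y, a)` that stand for `v(y, a)`. -/
def gap : FreeGroup (α × ι) := bpowRight (map (·, x) H) d * bpowLeft (map (·, x') H) d'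

variable (H : FreeGroup α) {x x' x'' : ι} {d d' d'' : Bool}

/-- `H` lies in the gap on the side of `x'^{d'}` where `φ_H` puts it; a copy of `H` tagged by a
neighbour can only share that gap if the neighbour is a letter other than `x'`. -/
theorem bpowLeft_slice_gap_mul_bpowRight_slice_gap (h : x = x' → d = d')
    (h' : x' = x'' → d' = d'') :
    bpowLeft (slice x' (gap H x d x' d')) d' * bpowRight (slice x' (gap H x' d' x'' d'')) d' =
      H := by
  cases d <;> cases d' <;> cases d'' <;>
    simp_all [gap, bpowLeft, bpowRight, slice_map_prodMk, eq_comm]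

variable [DecidableEq α]

theorem norm_bpowLeft_add_norm_bpowRight (g : FreeGroup α) (d : Bool) :
    norm (bpowLeft g d) + norm (bpowRight g d) = norm g := by
  cases d <;> simp [bpowLeft, bpowRight]

theorem norm_bpowLeft_le (g : FreeGroup α) (d : Bool) : norm (bpowLeft g d) ≤ norm g :=
  (Nat.le_add_right _ _).trans (norm_bpowLeft_add_norm_bpowRight g d).le

theorem norm_bpowRight_le (g : FreeGroup α) (d : Bool) : norm (bpowRight g d) ≤ norm g :=
  (Nat.le_add_left _ _).trans (norm_bpowLeft_add_norm_bpowRight g d).le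

theorem norm_gap_add_norm_gap_le :
    norm (gap H x d x' d') + norm (gap H x' d' x'' d'') ≤ 3 * norm H := by
  have h₁ := norm_mul_le (bpowRight (map (·, x) H) d) (bpowLeft (map (·, x') H) d')
  have h₂ := norm_mul_le (bpowRight (map (·, x') H) d') (bpowLeft (map (·, x'') H) d'')
  have := norm_bpowLeft_add_norm_bpowRight (map (·, x') H) d'
  have := (norm_bpowRight_le (map (·, x) H) d).trans (norm_map_le _ H)
  have := (norm_bpowLeft_le (map (·, x'') H) d'').trans (norm_map_le _ H)
  have := norm_map_le (·, x') H
  rw [gap, gap]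
  omega

theorem norm_le_norm_gap_add_norm_gap (h : x = x' → d = d') (h' : x' = x'' → d' = d'') :
    norm H ≤ norm (gap H x d x' d') + norm (gap H x' d' x'' d'') := by
  conv_lhs => rw [← bpowLeft_slice_gap_mul_bpowRight_slice_gap H h h']
  exact (norm_mul_le _ _).trans (add_le_add ((norm_bpowLeft_le _ _).trans (norm_slice_le _ _))
    ((norm_bpowRight_le _ _).trans (norm_slice_le _ _)))

end Gaps

end FreeGroup

open FreeGroup

theorem List.append_cons_inj_of_forall {γ : Type*} {p : γ → Bool} {U V R S : List γ} {c c' : γ}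
    (hU : ∀ a ∈ U, p a) (hV : ∀ a ∈ V, p a) (hc : ¬p c) (hc' : ¬p c')
    (h : U ++ c :: R = V ++ c' :: S) : U = V ∧ c :: R = c' :: S := by
  have hUV : U = V := by
    simpa [List.takeWhile_append_of_pos hU, List.takeWhile_append_of_pos hV, hc, hc'] using
      congrArg (List.takeWhile p) h
  exact ⟨hUV, List.append_cancel_left (hUV ▸ h)⟩

def history {α : Type*} (t : ℕ) (y : ℕ → α) (e : ℕ → Bool) : FreeGroup α :=
  mk ((List.range t).map fun i => (y i, e i))

theorem history_succ {α : Type*} (t : ℕ) (y : ℕ → α) (e : ℕ → Bool) :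
    history (t + 1) y e = history t y e * mk [(y t, e t)] := by
  simp [history, List.range_succ, mul_mk]

namespace ReducedHistory

variable {n t t' : ℕ} {y y' : ℕ → MLetter n} {e e' : ℕ → Bool}

theorem isReduced (h : ReducedHistory n t y e) :
    IsReduced ((List.range t).map fun i => (y i, e i)) := by
  rw [FreeGroup.IsReduced, List.isChain_map, List.isChain_range]
  intro i hi hy
  by_contra he
  exact h i (by omega) ⟨hy.symm, by revert he; cases e i <;> cases e (i + 1) <;> simp⟩

theorem norm_history (h : ReducedHistory n t y e) : norm (history t y e) = t := by
  rw [FreeGroup.norm, history, h.isReduced.toWord_mk, List.length_map, List.length_range]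

theorem eq_of_history_eq (h : ReducedHistory n t y e) (h' : ReducedHistory n t' y' e')
    (hH : history t' y' e' = history t y e) : t' = t ∧ ∀ i < t, y' i = y i ∧ e' i = e i := by
  have hl := congrArg toWord hH
  rw [history, history, h.isReduced.toWord_mk, h'.isReduced.toWord_mk] at hl
  obtain rfl : t' = t := by simpa using congrArg List.length hl
  exact ⟨rfl, fun i hi => by simpa using List.map_inj_left.1 hl i (List.mem_range.2 hi)⟩

end ReducedHistory

theorem rlen_eq_norm {n : ℕ} (w : FreeGroup (MLetter n)) : rlen n w = norm w := rfl

section VHom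

variable {n : ℕ} (η : MLetter n × Fin n ≃ Fin (n * (n + 2)))

def vHom : FreeGroup (MLetter n × Fin n) →* FreeGroup (MLetter n) :=
  lift fun q => vWord n η q.1 q.2

theorem kVal_le (y : MLetter n) (a : Fin n) : kVal n η y a ≤ n * (n + 2) := (η (y, a)).isLt

theorem vWord_eq_vElem (y : MLetter n) (a : Fin n) :
    vWord n η y a =
      vElem (Sum.inr 0) (Sum.inr 1) (kVal n η y a) (2 * (n * (n + 2)) - kVal n η y a) := by
  rw [vWord, ← Nat.mul_assoc]
  rfl

theorem norm_vWord (y : MLetter n) (a : Fin n) : norm (vWord n η y a) = Dconst n := by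
  have hk := kVal_le η y a
  rw [vWord_eq_vElem, norm_vElem, Dconst, show 4 * n * (n + 2) = 4 * (n * (n + 2)) by ring]
  omega

theorem cancelsAtMost_vWord (hn : 0 < n) :
    CancelsAtMost (fun q : MLetter n × Fin n => vWord n η q.1 q.2) (n * (n + 2)) := by
  simp only [vWord_eq_vElem]
  exact cancelsAtMost_vElem (fun q q' h => η.injective (Fin.ext (Nat.succ_injective h)))
    (Nat.mul_pos hn (by omega)) (fun q => kVal_le η _ _) (by simp)

theorem norm_vHom_le (g : FreeGroup (MLetter n × Fin n)) :
    norm (vHom η g) ≤ Dconst n * norm g :=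
  norm_lift_le (L := Dconst n) (f := fun q : MLetter n × Fin n => vWord n η q.1 q.2)
    (fun q => (norm_vWord η q.1 q.2).le) g

theorem dconst_mul_norm_le_two_mul_norm_vHom (hn : 0 < n) (g : FreeGroup (MLetter n × Fin n)) :
    Dconst n * norm g ≤ 2 * norm (vHom η g) := by
  have hD : Dconst n = 4 * (n * (n + 2)) := by rw [Dconst]; ring
  have h := (cancelsAtMost_vWord η hn).mul_norm_le_norm_lift (fun q => norm_vWord η q.1 q.2)
    (by have := Nat.mul_pos hn (by omega : 0 < n + 2); omega) g
  rw [hD, show 4 * (n * (n + 2)) - 2 * (n * (n + 2)) = 2 * (n * (n + 2)) by omega] at h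
  rw [hD, show 4 * (n * (n + 2)) * norm g = 2 * (2 * (n * (n + 2)) * norm g) by ring]
  exact Nat.mul_le_mul_left 2 h

theorem vHom_injective (hn : 0 < n) : Function.Injective (vHom η) :=
  (cancelsAtMost_vWord η hn).lift_injective (fun q => norm_vWord η q.1 q.2) (by
    have := Nat.mul_pos hn (by omega : 0 < n + 2)
    rw [Dconst, show 4 * n * (n + 2) = 4 * (n * (n + 2)) by ring]
    omega)

theorem norm_vHom_bpowLeft_map_le (H : FreeGroup (MLetter n)) (x : Fin n) (d : Bool) :
    norm (vHom η (bpowLeft (map (·, x) H) d)) ≤ Dconst n * norm H :=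
  (norm_vHom_le η _).trans
    (Nat.mul_le_mul_left _ ((norm_bpowLeft_le _ _).trans (norm_map_le _ _)))

theorem norm_vHom_bpowRight_map_le (H : FreeGroup (MLetter n)) (x : Fin n) (d : Bool) :
    norm (vHom η (bpowRight (map (·, x) H) d)) ≤ Dconst n * norm H :=
  (norm_vHom_le η _).trans
    (Nat.mul_le_mul_left _ ((norm_bpowRight_le _ _).trans (norm_map_le _ _)))

section Gaps

variable (H : FreeGroup (MLetter n)) {x₁ x₂ x₃ : Fin n} {d₁ d₂ d₃ : Bool}

theorem norm_vHom_gap_add_norm_vHom_gap_le :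
    norm (vHom η (gap H x₁ d₁ x₂ d₂)) + norm (vHom η (gap H x₂ d₂ x₃ d₃)) ≤
      3 * (Dconst n * norm H) := by
  have h := Nat.mul_le_mul_left (Dconst n) (norm_gap_add_norm_gap_le H (x := x₁) (x' := x₂)
    (x'' := x₃) (d := d₁) (d' := d₂) (d'' := d₃))
  rw [Nat.mul_add, Nat.mul_left_comm] at h
  exact (add_le_add (norm_vHom_le η _) (norm_vHom_le η _)).trans h

theorem dconst_mul_norm_le_two_mul_norm_vHom_gap_add (hn : 0 < n)
    (h₁₂ : x₁ = x₂ → d₁ = d₂) (h₂₃ : x₂ = x₃ → d₂ = d₃) :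
    Dconst n * norm H ≤
      2 * (norm (vHom η (gap H x₁ d₁ x₂ d₂)) + norm (vHom η (gap H x₂ d₂ x₃ d₃))) := by
  have h₁ := dconst_mul_norm_le_two_mul_norm_vHom η hn (gap H x₁ d₁ x₂ d₂)
  have h₂ := dconst_mul_norm_le_two_mul_norm_vHom η hn (gap H x₂ d₂ x₃ d₃)
  have h := Nat.mul_le_mul_left (Dconst n) (norm_le_norm_gap_add_norm_gap H h₁₂ h₂₃)
  rw [Nat.mul_add] at h
  omega

end Gaps

variable (n) in
def bWordSubgroup : Subgroup (FreeGroup (MLetter n)) where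
  carrier := {w | IsBWord n w}
  mul_mem' ha hb p hp :=
    (List.mem_append.1 ((toWord_mul_sublist _ _).subset hp)).elim (ha p) (hb p)
  one_mem' p hp := by simp at hp
  inv_mem' {w} hw p hp := by
    rw [toWord_inv, invRev, List.mem_reverse, List.mem_map] at hp
    obtain ⟨q, hq, rfl⟩ := hp
    exact hw q hq

theorem isBWord_vHom (g : FreeGroup (MLetter n × Fin n)) : IsBWord n (vHom η g) := by
  have hb : ∀ i, of (Sum.inr i : MLetter n) ∈ bWordSubgroup n := fun i p hp => by
    simp only [toWord_of, List.mem_singleton] at hp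
    simp [hp]
  have hv : ∀ q : MLetter n × Fin n, vWord n η q.1 q.2 ∈ bWordSubgroup n := fun q =>
    Subgroup.mul_mem _ (Subgroup.mul_mem _ (Subgroup.pow_mem _ (hb 0) _)
      (Subgroup.pow_mem _ (Subgroup.mul_mem _ (hb 1) (hb 0)) _)) (Subgroup.pow_mem _ (hb 1) _)
  exact range_lift_le (Set.range_subset_iff.2 hv) ⟨g, rfl⟩

end VHom

section Sandwich

variable {n : ℕ}

theorem bpow_of_eq_mk {α : Type*} (a : α) (d : Bool) : bpow (of a) d = mk [(a, d)] := by
  cases d <;> rfl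

theorem adjacent_not_inverse_of_rlen_eq_three {x₁ x₂ x₃ : Fin n} {d₁ d₂ d₃ : Bool}
    (h : rlen n (bpow (of (Sum.inl x₁)) d₁ * bpow (of (Sum.inl x₂)) d₂ *
      bpow (of (Sum.inl x₃)) d₃) = 3) :
    (x₁ = x₂ → d₁ = d₂) ∧ (x₂ = x₃ → d₂ = d₃) := by
  rw [rlen_eq_norm] at h
  rw [bpow_of_eq_mk, bpow_of_eq_mk, bpow_of_eq_mk, mul_mk, mul_mk] at h
  simpa [isReduced_cons_cons] using isReduced_of_norm_mk_eq_length h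

theorem isReduced_cons_toWord {u : FreeGroup (MLetter n)} (hu : IsBWord n u) (x : Fin n)
    (d : Bool) : IsReduced ((Sum.inl x, d) :: u.toWord) :=
  List.isChain_cons.2 ⟨fun b hb hxb => by
    simpa [← hxb] using hu b (List.mem_of_mem_head? hb), isReduced_toWord⟩

theorem isReduced_toWord_append {u : FreeGroup (MLetter n)} (hu : IsBWord n u) {x : Fin n}
    {d : Bool} {R : List (MLetter n × Bool)} (hR : IsReduced ((Sum.inl x, d) :: R)) :
    IsReduced (u.toWord ++ (Sum.inl x, d) :: R) :=
  List.isChain_append.2 ⟨isReduced_toWord, hR, fun a ha b hb hab => by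
    obtain rfl : b = (Sum.inl x, d) := by simpa using hb.symm
    simpa [hab] using hu a (List.mem_of_mem_getLast? ha)⟩

theorem isReduced_cons_toWord_append {u : FreeGroup (MLetter n)} (hu : IsBWord n u)
    {x x' : Fin n} {d d' : Bool} (hxx' : x = x' → d = d') {R : List (MLetter n × Bool)}
    (h : IsReduced (u.toWord ++ (Sum.inl x', d') :: R)) :
    IsReduced ((Sum.inl x, d) :: (u.toWord ++ (Sum.inl x', d') :: R)) := by
  refine List.isChain_cons.2 ⟨fun b hb hxb => ?_, h⟩
  cases hw : u.toWord with
  | nil =>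
    rw [hw] at hb
    obtain rfl : b = (Sum.inl x', d') := by simpa using hb.symm
    exact hxx' (Sum.inl_injective hxb)
  | cons q l =>
    rw [hw] at hb
    obtain rfl : b = q := by simpa using hb.symm
    simpa [← hxb] using hu b (hw ▸ List.mem_cons_self)

theorem toWord_sandwich {u₀ u₁ u₂ u₃ : FreeGroup (MLetter n)} (hu₀ : IsBWord n u₀)
    (hu₁ : IsBWord n u₁) (hu₂ : IsBWord n u₂) (hu₃ : IsBWord n u₃) {x₁ x₂ x₃ : Fin n}
    {d₁ d₂ d₃ : Bool} (h₁₂ : x₁ = x₂ → d₁ = d₂) (h₂₃ : x₂ = x₃ → d₂ = d₃) :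
    (u₀ * bpow (of (Sum.inl x₁)) d₁ * u₁ * bpow (of (Sum.inl x₂)) d₂ * u₂ *
        bpow (of (Sum.inl x₃)) d₃ * u₃).toWord =
      u₀.toWord ++ (Sum.inl x₁, d₁) ::
        (u₁.toWord ++ (Sum.inl x₂, d₂) :: (u₂.toWord ++ (Sum.inl x₃, d₃) :: u₃.toWord)) := by
  have hred := isReduced_toWord_append hu₀ <| isReduced_cons_toWord_append hu₁ h₁₂ <|
    isReduced_toWord_append hu₁ <| isReduced_cons_toWord_append hu₂ h₂₃ <|
    isReduced_toWord_append hu₂ (isReduced_cons_toWord hu₃ x₃ d₃)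
  rw [← hred.toWord_mk]
  congr 1
  conv_lhs => rw [← mk_toWord (x := u₀), ← mk_toWord (x := u₁), ← mk_toWord (x := u₂),
    ← mk_toWord (x := u₃)]
  simp only [bpow_of_eq_mk, mul_mk, List.append_assoc, List.cons_append, List.nil_append]

theorem eq_of_sandwich_eq {u₀ u₁ u₂ u₃ v₀ v₁ v₂ v₃ : FreeGroup (MLetter n)}
    (hu₀ : IsBWord n u₀) (hu₁ : IsBWord n u₁) (hu₂ : IsBWord n u₂) (hu₃ : IsBWord n u₃)
    (hv₀ : IsBWord n v₀) (hv₁ : IsBWord n v₁) (hv₂ : IsBWord n v₂) (hv₃ : IsBWord n v₃)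
    {x₁ x₂ x₃ : Fin n} {d₁ d₂ d₃ : Bool} (h₁₂ : x₁ = x₂ → d₁ = d₂) (h₂₃ : x₂ = x₃ → d₂ = d₃)
    (h : u₀ * bpow (of (Sum.inl x₁)) d₁ * u₁ * bpow (of (Sum.inl x₂)) d₂ * u₂ *
        bpow (of (Sum.inl x₃)) d₃ * u₃ =
      v₀ * bpow (of (Sum.inl x₁)) d₁ * v₁ * bpow (of (Sum.inl x₂)) d₂ * v₂ *
        bpow (of (Sum.inl x₃)) d₃ * v₃) :
    u₁ = v₁ ∧ u₂ = v₂ := by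
  have hw := congrArg toWord h
  rw [toWord_sandwich hu₀ hu₁ hu₂ hu₃ h₁₂ h₂₃, toWord_sandwich hv₀ hv₁ hv₂ hv₃ h₁₂ h₂₃] at hw
  obtain ⟨-, hw⟩ := List.append_cons_inj_of_forall hu₀ hv₀ (by simp) (by simp) hw
  obtain ⟨h₁, hw⟩ :=
    List.append_cons_inj_of_forall hu₁ hv₁ (by simp) (by simp) (List.cons_injective hw)
  obtain ⟨h₂, -⟩ :=
    List.append_cons_inj_of_forall hu₂ hv₂ (by simp) (by simp) (List.cons_injective hw)
  exact ⟨toWord_injective h₁, toWord_injective h₂⟩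

end Sandwich

section PhiHist

variable {n : ℕ} (η : MLetter n × Fin n ≃ Fin (n * (n + 2)))

theorem phiM_vHom (z : MLetter n) (ε : Bool) (g : FreeGroup (MLetter n × Fin n)) :
    phiM n η z ε (vHom η g) = vHom η g := by
  refine DFunLike.congr_fun (ext_hom ((phiM n η z ε).comp (vHom η)) (vHom η) fun q => ?_) g
  simp [vHom, vWord, bb1, bb2, phiM, phiAux]

/-- The composite of the `φ_y^{ε}` along a history `H`: it sends `a₁` to `v_H(a) a₁`, where
`v_H(a)` is `H` with each letter `y` replaced by `v(y, a)`. -/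
def phiHist (H : FreeGroup (MLetter n)) : FreeGroup (MLetter n) →* FreeGroup (MLetter n) :=
  lift (Sum.elim (fun a => vHom η (map (·, a) H) * of (Sum.inl a)) (fun i => of (Sum.inr i)))

theorem phiHist_one : phiHist η 1 = MonoidHom.id _ :=
  ext_hom _ _ fun z => by cases z <;> simp [phiHist]

theorem phiM_comp_phiHist (H : FreeGroup (MLetter n)) (z : MLetter n) (ε : Bool) :
    (phiM n η z ε).comp (phiHist η H) = phiHist η (H * mk [(z, ε)]) := by
  refine ext_hom _ _ fun q => ?_
  cases q with
  | inl a =>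
    simp only [MonoidHom.comp_apply, phiHist, lift_apply_of, Sum.elim_inl, _root_.map_mul,
      phiM_vHom, map.mk, List.map_cons, List.map_nil]
    simp only [vHom, lift_mk_singleton]
    cases ε <;> simp [phiM, phiAux, bpow, mul_assoc]
  | inr i => simp [phiHist, phiM, phiAux]

theorem phiHist_bpow_inl (H : FreeGroup (MLetter n)) (x : Fin n) (d : Bool) :
    phiHist η H (bpow (of (Sum.inl x)) d) =
      vHom η (bpowLeft (map (·, x) H) d) * bpow (of (Sum.inl x)) d *
        vHom η (bpowRight (map (·, x) H) d) := by
  cases d <;> simp [phiHist, bpow, bpowLeft, bpowRight]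

variable {t : ℕ} {y : ℕ → MLetter n} {e : ℕ → Bool} {w : ℕ → FreeGroup (MLetter n)}

theorem IsSemiComputation.eq_phiHist (h : IsSemiComputation n η t y e w) :
    ∀ i ≤ t, w i = phiHist η (history i y e) (w 0)
  | 0, _ => by rw [history, List.range_zero, List.map_nil, ← one_eq_mk, phiHist_one]; rfl
  | i + 1, hi => by
    rw [h i hi, IsSemiComputation.eq_phiHist h i (by omega), ← MonoidHom.comp_apply,
      phiM_comp_phiHist, history_succ]

theorem IsSemiComputation.eq_sandwich (h : IsSemiComputation n η t y e w)
    {x₁ x₂ x₃ : Fin n} {d₁ d₂ d₃ : Bool}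
    (h0 : w 0 = bpow (of (Sum.inl x₁)) d₁ * bpow (of (Sum.inl x₂)) d₂ *
      bpow (of (Sum.inl x₃)) d₃) :
    w t = vHom η (bpowLeft (map (·, x₁) (history t y e)) d₁) * bpow (of (Sum.inl x₁)) d₁ *
      vHom η (gap (history t y e) x₁ d₁ x₂ d₂) * bpow (of (Sum.inl x₂)) d₂ *
      vHom η (gap (history t y e) x₂ d₂ x₃ d₃) * bpow (of (Sum.inl x₃)) d₃ *
      vHom η (bpowRight (map (·, x₃) (history t y e)) d₃) := by
  rw [h.eq_phiHist η t le_rfl, h0]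
  simp only [_root_.map_mul, phiHist_bpow_inl, gap, mul_assoc]

end PhiHist


/-- **Lemma 5.14.** Let `w₀ → ⋯ → w_t` be a semi-computation with reduced history `H`,
where `w₀ = x₁^{δ₁} x₂^{δ₂} x₃^{δ₃}` is reduced with `x_i ∈ 𝒜₁`.  Then there are
`u₀, u₁, u₂, u₃ ∈ F(ℬ)` with
(1) `w_t = u₀ x₁^{δ₁} u₁ x₂^{δ₂} u₂ x₃^{δ₃} u₃`;
(2) `‖u₀‖, ‖u₃‖ ≤ D·t`;
(3) `(1/2)·D·t ≤ ‖u₁‖ + ‖u₂‖ ≤ 3·D·t`;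
(4) the pair `(u₁, u₂)` uniquely determines `H`. -/
theorem statement15 (n : ℕ) (hn : 0 < n) (η : MLetter n × Fin n ≃ Fin (n * (n + 2)))
    (x₁ x₂ x₃ : Fin n) (d₁ d₂ d₃ : Bool)
    (t : ℕ) (y : ℕ → MLetter n) (e : ℕ → Bool) (w : ℕ → FreeGroup (MLetter n))
    (hsemi : IsSemiComputation n η t y e w) (hhist : ReducedHistory n t y e)
    (h0 : w 0 = bpow (FreeGroup.of (Sum.inl x₁)) d₁ * bpow (FreeGroup.of (Sum.inl x₂)) d₂ *
      bpow (FreeGroup.of (Sum.inl x₃)) d₃)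
    (h0red : rlen n (w 0) = 3) :
    ∃ u₀ u₁ u₂ u₃ : FreeGroup (MLetter n),
      IsBWord n u₀ ∧ IsBWord n u₁ ∧ IsBWord n u₂ ∧ IsBWord n u₃ ∧
      w t = u₀ * bpow (FreeGroup.of (Sum.inl x₁)) d₁ * u₁ *
        bpow (FreeGroup.of (Sum.inl x₂)) d₂ * u₂ *
        bpow (FreeGroup.of (Sum.inl x₃)) d₃ * u₃ ∧
      rlen n u₀ ≤ Dconst n * t ∧ rlen n u₃ ≤ Dconst n * t ∧
      Dconst n * t ≤ 2 * (rlen n u₁ + rlen n u₂) ∧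
      rlen n u₁ + rlen n u₂ ≤ 3 * (Dconst n * t) ∧
      ∀ (t' : ℕ) (y' : ℕ → MLetter n) (e' : ℕ → Bool) (w' : ℕ → FreeGroup (MLetter n)),
        IsSemiComputation n η t' y' e' w' → ReducedHistory n t' y' e' → w' 0 = w 0 →
        ∀ u₀' u₃' : FreeGroup (MLetter n), IsBWord n u₀' → IsBWord n u₃' →
          w' t' = u₀' * bpow (FreeGroup.of (Sum.inl x₁)) d₁ * u₁ *
            bpow (FreeGroup.of (Sum.inl x₂)) d₂ * u₂ *
            bpow (FreeGroup.of (Sum.inl x₃)) d₃ * u₃' →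
          t' = t ∧ ∀ i < t, y' i = y i ∧ e' i = e i := by
  obtain ⟨h₁₂, h₂₃⟩ := adjacent_not_inverse_of_rlen_eq_three (h0 ▸ h0red)
  have hH : norm (history t y e) = t := hhist.norm_history
  refine ⟨_, _, _, _, isBWord_vHom η _, isBWord_vHom η _, isBWord_vHom η _, isBWord_vHom η _,
    hsemi.eq_sandwich η h0, ?_, ?_, ?_, ?_, ?_⟩
  · simpa only [hH, rlen_eq_norm] using norm_vHom_bpowLeft_map_le η (history t y e) x₁ d₁
  · simpa only [hH, rlen_eq_norm] using norm_vHom_bpowRight_map_le η (history t y e) x₃ d₃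
  · simpa only [hH, rlen_eq_norm] using
      dconst_mul_norm_le_two_mul_norm_vHom_gap_add η (history t y e) hn h₁₂ h₂₃
  · simpa only [hH, rlen_eq_norm] using norm_vHom_gap_add_norm_vHom_gap_le η (history t y e)
  · intro t' y' e' w' hsemi' hhist' hw0' u₀' u₃' hu₀' hu₃' hwt'
    obtain ⟨hg₁, hg₂⟩ := eq_of_sandwich_eq (isBWord_vHom η _) (isBWord_vHom η _)
      (isBWord_vHom η _) (isBWord_vHom η _) hu₀' (isBWord_vHom η _) (isBWord_vHom η _) hu₃'
      h₁₂ h₂₃ ((hsemi'.eq_sandwich η (hw0'.trans h0)).symm.trans hwt')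
    refine hhist.eq_of_history_eq hhist' ?_
    rw [← bpowLeft_slice_gap_mul_bpowRight_slice_gap (history t' y' e') h₁₂ h₂₃,
      vHom_injective η hn hg₁, vHom_injective η hn hg₂,
      bpowLeft_slice_gap_mul_bpowRight_slice_gap (history t y e) h₁₂ h₂₃]
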